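/- Let d ≥ 1, κ ≥ 2d, and let α₁, α₂ : ℝ^{2d} → ℂ be continuously differentiable with ‖α_i‖_{A^{κ,2}} < ∞ and ‖∇_v α_i‖_{A^{κ,2}} < ∞. Define the phase densities φ_i(x) := ∫_{ℝ^d} conj(α_i)(x,v) ∇_v α_i(x,v) dv. Then sup_{x ∈ ℝ^d} |φ₁(x) − φ₂(x)| ≤ A(κ,d) (‖∇_v α₁‖_{A^{κ,2}} + ‖∇_v α₂‖_{A^{κ,2}}) ‖α₁ − α₂‖_{A^{κ,2}}, where A(κ,d) := inf_{R>0} (1+R)^κ/(ω_d R^d) and ω_d is the Lebesgue volume of the unit ball in ℝ^d. -/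

import Mathlib

open MeasureTheory
open scoped ENNReal NNReal

/-- `ℝ^d` as a Euclidean space. -/
abbrev E (d : ℕ) : Type := EuclideanSpace ℝ (Fin d)

/-- The `A^{κ,p}` norm: `sup_{R ≥ 0} (1+R)^{-κ/p} (∫ sup_{|z̄| ≤ R} ‖f(z+z̄)‖^p dz)^{1/p}`. -/
noncomputable def Anorm {G F : Type*} [NormedAddCommGroup G] [MeasureSpace G]
    [NormedAddCommGroup F] (κ p : ℝ) (f : G → F) : ℝ≥0∞ :=
  ⨆ R : NNReal, (ENNReal.ofReal (1 + (R : ℝ))) ^ (-(κ / p)) *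
    (∫⁻ z, ⨆ w ∈ Metric.closedBall (0 : G) (R : ℝ),
      ENNReal.ofReal (‖f (z + w)‖ ^ p)) ^ (1 / p)

/-- The constant `A(a,d) = inf_{R>0} (1+R)^a / (ω_d R^d)`, where `ω_d` is the Lebesgue
volume of the unit ball in `ℝ^d`. -/
noncomputable def Aconst (d : ℕ) (a : ℝ) : ℝ :=
  ⨅ R : {R : ℝ // 0 < R},
    (1 + R.1) ^ a / ((volume (Metric.ball (0 : E d) 1)).toReal * R.1 ^ (d : ℝ))

/-- The velocity gradient `∇ᵥα` of a function on phase space, as a continuous linear map. -/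
noncomputable def gradV (d : ℕ) (α : E d × E d → ℂ) (z : E d × E d) : E d →L[ℝ] ℂ :=
  fderiv ℝ (fun w : E d => α (z.1, w)) z.2

/-- The phase density `φ(x) = ∫ conj(α)(x,v) ∇ᵥα(x,v) dv`. -/
noncomputable def phaseDensity (d : ℕ) (α : E d × E d → ℂ) (x : E d) : E d →L[ℝ] ℂ :=
  ∫ v : E d, (starRingEnd ℂ) (α (x, v)) • gradV d α (x, v)

/-!
Write `c = α₁ - α₂`. At a fixed `x`, the difference of the phase densities is
`∫ conj c ∇ᵥα₁ + ∫ conj α₂ ∇ᵥc`, and integrating the second term by parts in `v` turns it into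
`-∫ c ∇ᵥ(conj α₂)`; by Cauchy–Schwarz the difference is therefore at most
`‖c(x,·)‖₂ (‖∇ᵥα₁(x,·)‖₂ + ‖∇ᵥα₂(x,·)‖₂)`. Each `L²` norm of a slice is controlled by the
`A^{κ,2}` norm: averaging `|f(x,v)|²` over the base points `x + y`, `|y| < R`, gives
`ω_d R^d ∫ |f(x,v)|² dv ≤ ∫ sup_{|z̄| ≤ R} |f(z + z̄)|² dz ≤ (1+R)^κ ‖f‖²_{A^{κ,2}}`.
Taking the infimum over `R` produces the constant `A(κ,d)`.
-/

open Metric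

section AnormBounds

variable {G F : Type*} [NormedAddCommGroup G] [MeasureSpace G] [NormedAddCommGroup F]

lemma lintegral_iSup_closedBall_le_Anorm {κ p : ℝ} (hp : 0 < p) (f : G → F) (R : ℝ≥0) :
    ∫⁻ z, ⨆ w ∈ closedBall (0 : G) R, ENNReal.ofReal (‖f (z + w)‖ ^ p) ≤
      ENNReal.ofReal (1 + R) ^ κ * Anorm κ p f ^ p := by
  set I := ∫⁻ z, ⨆ w ∈ closedBall (0 : G) R, ENNReal.ofReal (‖f (z + w)‖ ^ p)
  set c := ENNReal.ofReal (1 + R)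
  have hc0 : c ≠ 0 := by positivity
  have hc : c ^ (-(κ / p)) * I ^ (1 / p) ≤ Anorm κ p f :=
    le_iSup (fun R : ℝ≥0 => ENNReal.ofReal (1 + (R : ℝ)) ^ (-(κ / p)) *
      (∫⁻ z, ⨆ w ∈ closedBall (0 : G) R, ENNReal.ofReal (‖f (z + w)‖ ^ p)) ^ (1 / p)) R
  calc I = (c ^ (κ / p) * (c ^ (-(κ / p)) * I ^ (1 / p))) ^ p := by
        rw [← mul_assoc, ← ENNReal.rpow_add _ _ hc0 ENNReal.ofReal_ne_top, add_neg_cancel,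
          ENNReal.rpow_zero, one_mul, ← ENNReal.rpow_mul, one_div_mul_cancel hp.ne',
          ENNReal.rpow_one]
    _ ≤ (c ^ (κ / p) * Anorm κ p f) ^ p := by gcongr
    _ = c ^ κ * Anorm κ p f ^ p := by
        rw [ENNReal.mul_rpow_of_nonneg _ _ hp.le, ← ENNReal.rpow_mul, div_mul_cancel₀ _ hp.ne']

end AnormBounds

section Slices

variable {X V F : Type*} [NormedAddCommGroup X] [MeasureSpace X] [BorelSpace X]
  [NormedAddCommGroup V] [MeasureSpace V] [BorelSpace V] [SecondCountableTopology V]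
  [SFinite (volume : Measure V)] [NormedAddCommGroup F]

lemma volume_ball_mul_lintegral_slice_le [(volume : Measure X).IsAddLeftInvariant] {κ p : ℝ}
    (hp : 0 < p) {f : X × V → F} (hf : Continuous f) (x : X) (R : ℝ≥0) :
    volume (ball (0 : X) R) * ∫⁻ v, ENNReal.ofReal (‖f (x, v)‖ ^ p) ≤
      ENNReal.ofReal (1 + R) ^ κ * Anorm κ p f ^ p := by
  set S : X × V → ℝ≥0∞ := fun z => ⨆ w ∈ closedBall (0 : X × V) R,
    ENNReal.ofReal (‖f (z + w)‖ ^ p)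
  have hS : Measurable S := by
    refine LowerSemicontinuous.measurable (lowerSemicontinuous_biSup fun w _ => ?_)
    exact (ENNReal.continuous_ofReal.comp
      ((hf.comp (continuous_id.add continuous_const)).norm.rpow_const
        fun _ => Or.inr hp.le)).lowerSemicontinuous
  have hshift : ∀ y ∈ ball (0 : X) R, ∀ v,
      ENNReal.ofReal (‖f (x, v)‖ ^ p) ≤ S (x + y, v) := by
    intro y hy v
    refine le_iSup₂_of_le ((-y, 0) : X × V) ?_ (by simp)
    rw [mem_ball_zero_iff] at hy
    simpa [Prod.norm_def] using hy.le
  calc volume (ball (0 : X) R) * ∫⁻ v, ENNReal.ofReal (‖f (x, v)‖ ^ p)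
      = ∫⁻ _ in ball (0 : X) R, ∫⁻ v, ENNReal.ofReal (‖f (x, v)‖ ^ p) := by
        rw [setLIntegral_const, mul_comm]
    _ ≤ ∫⁻ y in ball (0 : X) R, ∫⁻ v, S (x + y, v) :=
        setLIntegral_mono' measurableSet_ball fun y hy => lintegral_mono (hshift y hy)
    _ ≤ ∫⁻ y, ∫⁻ v, S (x + y, v) := setLIntegral_le_lintegral _ _
    _ = ∫⁻ y, ∫⁻ v, S (y, v) := lintegral_add_left_eq_self (fun y => ∫⁻ v, S (y, v)) x
    _ = ∫⁻ z, S z := (lintegral_prod _ hS.aemeasurable).symm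
    _ ≤ ENNReal.ofReal (1 + R) ^ κ * Anorm κ p f ^ p := lintegral_iSup_closedBall_le_Anorm hp f R

variable [NormedSpace ℝ X] [FiniteDimensional ℝ X] [(volume : Measure X).IsAddHaarMeasure]

lemma eLpNorm_slice_le {κ : ℝ} {f : X × V → F} (hf : Continuous f) (x : X) {R : ℝ≥0}
    (hR : 0 < R) :
    eLpNorm (fun v => f (x, v)) 2 ≤
      (ENNReal.ofReal (1 + R) ^ κ / volume (ball (0 : X) R)) ^ (2⁻¹ : ℝ) * Anorm κ 2 f := by
  have hvol : volume (ball (0 : X) R) ≠ 0 := (measure_ball_pos _ _ (by exact_mod_cast hR)).ne'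
  have hsq : eLpNorm (fun v => f (x, v)) 2 ^ (2 : ℝ) =
      ∫⁻ v, ENNReal.ofReal (‖f (x, v)‖ ^ (2 : ℝ)) := by
    have h := eLpNorm_nnreal_pow_eq_lintegral (μ := volume) (f := fun v => f (x, v))
      (p := 2) two_ne_zero
    push_cast at h
    rw [h]
    congr with v
    rw [← ofReal_norm, ENNReal.ofReal_rpow_of_nonneg (norm_nonneg _) zero_le_two]
  rw [← ENNReal.rpow_le_rpow_iff two_pos, ENNReal.mul_rpow_of_nonneg _ _ zero_le_two,
    ← ENNReal.rpow_mul, inv_mul_cancel₀ two_ne_zero, ENNReal.rpow_one, hsq]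
  calc ∫⁻ v, ENNReal.ofReal (‖f (x, v)‖ ^ (2 : ℝ))
      ≤ ENNReal.ofReal (1 + R) ^ κ * Anorm κ 2 f ^ (2 : ℝ) / volume (ball (0 : X) R) := by
        rw [ENNReal.le_div_iff_mul_le (Or.inl hvol) (Or.inl measure_ball_lt_top.ne), mul_comm]
        exact volume_ball_mul_lintegral_slice_le two_pos hf x R
    _ = _ := by rw [div_eq_mul_inv, div_eq_mul_inv, mul_right_comm]

lemma memLp_slice {κ : ℝ} {f : X × V → F} (hf : Continuous f) (hfin : Anorm κ 2 f < ⊤)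
    (x : X) : MemLp (fun v => f (x, v)) 2 := by
  refine ⟨(hf.comp (Continuous.prodMk_right x)).aestronglyMeasurable,
    (eLpNorm_slice_le hf x one_pos).trans_lt (ENNReal.mul_lt_top ?_ hfin)⟩
  refine ENNReal.rpow_lt_top_of_nonneg (by norm_num) (ENNReal.div_ne_top ?_ ?_)
  · exact ENNReal.rpow_ne_top_of_ne_zero (by simp) ENNReal.ofReal_ne_top
  · exact (measure_ball_pos _ _ (by norm_num)).ne'

end Slices

lemma lintegral_enorm_mul_enorm_le_eLpNorm_two {α E F : Type*} [MeasurableSpace α]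
    {μ : Measure α} [NormedAddCommGroup E] [NormedAddCommGroup F] {f : α → E} {g : α → F}
    (hf : AEStronglyMeasurable f μ) (hg : AEStronglyMeasurable g μ) :
    ∫⁻ x, ‖f x‖ₑ * ‖g x‖ₑ ∂μ ≤ eLpNorm f 2 μ * eLpNorm g 2 μ := by
  have h := eLpNorm_le_eLpNorm_mul_eLpNorm'_of_norm (p := 2) (q := 2) (r := 1) hf hg
    (fun s t => ‖s‖ * ‖t‖) 1 (Filter.Eventually.of_forall fun x => by simp)
  simpa [eLpNorm_one_eq_lintegral_enorm, enorm_mul] using h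

section PhaseDensity

variable {V : Type*} [NormedAddCommGroup V] [NormedSpace ℝ V] [FiniteDimensional ℝ V]
  [MeasurableSpace V] [BorelSpace V] {μ : Measure V} [μ.IsAddHaarMeasure]

open ComplexConjugate

lemma enorm_integral_conj_smul_sub_le {a b : V → ℂ} {a' b' : V → V →L[ℝ] ℂ}
    (ha : MemLp a 2 μ) (hb : MemLp b 2 μ) (ha' : MemLp a' 2 μ) (hb' : MemLp b' 2 μ)
    (hda : ∀ v, HasFDerivAt a (a' v) v) (hdb : ∀ v, HasFDerivAt b (b' v) v) :
    ‖(∫ v, conj (a v) • a' v ∂μ) - ∫ v, conj (b v) • b' v ∂μ‖ₑ ≤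
      eLpNorm (a - b) 2 μ * (eLpNorm a' 2 μ + eLpNorm b' 2 μ) := by
  set c := a - b
  have hc : MemLp c 2 μ := ha.sub hb
  have hdc : ∀ v, HasFDerivAt c (a' v - b' v) v := fun v => (hda v).sub (hdb v)
  have hdir : ∀ {g : V → V →L[ℝ] ℂ}, MemLp g 2 μ → ∀ u, MemLp (fun v => g v u) 2 μ :=
    fun hg u => (ContinuousLinearMap.apply ℝ ℂ u).comp_memLp' hg
  have hint : ∀ {f g : V → ℂ}, MemLp f 2 μ → MemLp g 2 μ →
      Integrable (fun v => conj (f v) * g v) μ := fun hf hg => hf.star.integrable_mul hg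
  have hintL : ∀ {f : V → ℂ} {g : V → V →L[ℝ] ℂ}, MemLp f 2 μ → MemLp g 2 μ →
      Integrable (fun v => conj (f v) • g v) μ :=
    fun hf hg => memLp_one_iff_integrable.1 (hg.smul hf.star)
  have hdiff : ∀ u, ((∫ v, conj (a v) • a' v ∂μ) - ∫ v, conj (b v) • b' v ∂μ) u =
      ∫ v, (conj (c v) * a' v u - conj (b' v u) * c v) ∂μ := by
    intro u
    have hbc' : Integrable (fun v => conj (b v) * (a' v - b' v) u) μ :=
      hint hb (hdir (ha'.sub hb') u)
    have ibp : ∫ v, conj (b v) * (a' v - b' v) u ∂μ = -∫ v, conj (b' v u) * c v ∂μ := by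
      have := integral_bilinear_hasFDerivAt_right_eq_neg_left_of_integrable (μ := μ) (v := u)
        (B := ContinuousLinearMap.mul ℝ ℂ) (f := fun v => star (b v)) (g := c)
        (hint (hdir hb' u) hc) hbc' (hint hb hc)
        (fun v _ => (hdb v).star) (fun v _ => hdc v)
      simpa using this
    calc ((∫ v, conj (a v) • a' v ∂μ) - ∫ v, conj (b v) • b' v ∂μ) u
        = (∫ v, conj (a v) * a' v u ∂μ) - ∫ v, conj (b v) * b' v u ∂μ := by
          rw [sub_apply, ContinuousLinearMap.integral_apply (hintL ha ha'),
            ContinuousLinearMap.integral_apply (hintL hb hb')]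
          rfl
      _ = (∫ v, conj (c v) * a' v u ∂μ) + ∫ v, conj (b v) * (a' v - b' v) u ∂μ := by
          rw [← integral_sub (hint ha (hdir ha' u)) (hint hb (hdir hb' u)),
            ← integral_add (hint hc (hdir ha' u)) hbc']
          congr with v
          simp only [c, Pi.sub_apply, map_sub, sub_apply]
          ring
      _ = ∫ v, (conj (c v) * a' v u - conj (b' v u) * c v) ∂μ := by
          rw [ibp, ← sub_eq_add_neg, integral_sub (hint hc (hdir ha' u)) (hint (hdir hb' u) hc)]
  refine ContinuousLinearMap.opENorm_le_bound _ fun u => ?_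
  have hpt : ∀ v, ‖conj (c v) * a' v u - conj (b' v u) * c v‖ₑ ≤
      (‖c v‖ₑ * ‖a' v‖ₑ + ‖c v‖ₑ * ‖b' v‖ₑ) * ‖u‖ₑ := by
    intro v
    calc ‖conj (c v) * a' v u - conj (b' v u) * c v‖ₑ
        ≤ ‖conj (c v) * a' v u‖ₑ + ‖conj (b' v u) * c v‖ₑ := enorm_sub_le
      _ = ‖c v‖ₑ * ‖a' v u‖ₑ + ‖b' v u‖ₑ * ‖c v‖ₑ := by
          rw [enorm_mul, enorm_mul, RCLike.enorm_conj, RCLike.enorm_conj]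
      _ ≤ ‖c v‖ₑ * (‖a' v‖ₑ * ‖u‖ₑ) + ‖b' v‖ₑ * ‖u‖ₑ * ‖c v‖ₑ := by
          gcongr <;> apply ContinuousLinearMap.le_opENorm
      _ = _ := by ring
  rw [hdiff u]
  calc ‖∫ v, (conj (c v) * a' v u - conj (b' v u) * c v) ∂μ‖ₑ
      ≤ ∫⁻ v, ‖conj (c v) * a' v u - conj (b' v u) * c v‖ₑ ∂μ :=
        enorm_integral_le_lintegral_enorm _
    _ ≤ ∫⁻ v, (‖c v‖ₑ * ‖a' v‖ₑ + ‖c v‖ₑ * ‖b' v‖ₑ) * ‖u‖ₑ ∂μ := lintegral_mono hpt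
    _ = ((∫⁻ v, ‖c v‖ₑ * ‖a' v‖ₑ ∂μ) + ∫⁻ v, ‖c v‖ₑ * ‖b' v‖ₑ ∂μ) * ‖u‖ₑ := by
        rw [lintegral_mul_const' _ _ enorm_ne_top,
          lintegral_add_left' (f := fun v => ‖c v‖ₑ * ‖a' v‖ₑ) (hc.1.enorm.mul ha'.1.enorm)]
    _ ≤ (eLpNorm c 2 μ * eLpNorm a' 2 μ + eLpNorm c 2 μ * eLpNorm b' 2 μ) * ‖u‖ₑ := by
        gcongr
        · exact lintegral_enorm_mul_enorm_le_eLpNorm_two hc.1 ha'.1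
        · exact lintegral_enorm_mul_enorm_le_eLpNorm_two hc.1 hb'.1
    _ = eLpNorm c 2 μ * (eLpNorm a' 2 μ + eLpNorm b' 2 μ) * ‖u‖ₑ := by ring

end PhaseDensity

lemma le_ofReal_iInf_mul {ι : Type*} [Nonempty ι] {c : ι → ℝ} {a b : ℝ≥0∞}
    (hc : 0 < ⨅ i, c i) (h : ∀ i, a ≤ ENNReal.ofReal (c i) * b) :
    a ≤ ENNReal.ofReal (⨅ i, c i) * b := by
  -- `hc` matters when `b = ⊤`, since `ENNReal.ofReal 0 * ⊤ = 0`
  rw [ENNReal.ofReal_iInf, ENNReal.iInf_mul fun _ h0 => ?_]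
  · exact le_iInf h
  · rw [← ENNReal.ofReal_iInf, ENNReal.ofReal_eq_zero] at h0
    exact absurd h0 hc.not_ge

section Euclidean

variable {d : ℕ}

lemma hasFDerivAt_gradV {α : E d × E d → ℂ} (hα : ContDiff ℝ 1 α) (x v : E d) :
    HasFDerivAt (fun w => α (x, w)) (gradV d α (x, v)) v :=
  ((hα.comp (contDiff_const.prodMk contDiff_id)).differentiable one_ne_zero v).hasFDerivAt

lemma continuous_gradV {α : E d × E d → ℂ} (hα : ContDiff ℝ 1 α) : Continuous (gradV d α) := by
  have h : gradV d α = fun z => fderiv ℝ α z ∘L ContinuousLinearMap.inr ℝ (E d) (E d) := by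
    funext z
    exact ((hα.differentiable one_ne_zero z).hasFDerivAt.comp z.2
      (hasFDerivAt_prodMk_right z.1 z.2)).fderiv
  rw [h]
  exact (hα.continuous_fderiv one_ne_zero).clm_comp continuous_const

lemma toReal_volume_ball_one_pos : 0 < (volume (ball (0 : E d) 1)).toReal :=
  ENNReal.toReal_pos (measure_ball_pos _ _ one_pos).ne' measure_ball_lt_top.ne

lemma ofReal_rpow_div_volume_ball (κ : ℝ) {R : ℝ} (hR : 0 < R) :
    ENNReal.ofReal (1 + R) ^ κ / volume (ball (0 : E d) R) =
      ENNReal.ofReal ((1 + R) ^ κ / ((volume (ball (0 : E d) 1)).toReal * R ^ (d : ℝ))) := by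
  rw [ENNReal.ofReal_div_of_pos (mul_pos toReal_volume_ball_one_pos (by positivity)),
    ENNReal.ofReal_mul ENNReal.toReal_nonneg, ENNReal.ofReal_toReal measure_ball_lt_top.ne,
    Measure.addHaar_ball_of_pos _ _ hR, finrank_euclideanSpace_fin, Real.rpow_natCast, mul_comm,
    ENNReal.ofReal_rpow_of_pos (by positivity)]

lemma Aconst_pos {κ : ℝ} (hκ : (d : ℝ) ≤ κ) : 0 < Aconst d κ := by
  have hω := toReal_volume_ball_one_pos (d := d)
  refine (one_div_pos.2 hω).trans_le (le_ciInf fun r => ?_)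
  have hr := r.2
  have hrκ : r.1 ^ (d : ℝ) ≤ (1 + r.1) ^ κ :=
    (Real.rpow_le_rpow hr.le (by linarith) d.cast_nonneg).trans
      (Real.rpow_le_rpow_of_exponent_le (by linarith) hκ)
  rw [div_le_div_iff₀ hω (by positivity)]
  nlinarith

end Euclidean

theorem statement15_general (d : ℕ) (κ : ℝ) (hκ : 2 * (d : ℝ) ≤ κ)
    (α₁ α₂ : E d × E d → ℂ) (hs₁ : ContDiff ℝ 1 α₁) (hs₂ : ContDiff ℝ 1 α₂)
    (hf₁ : Anorm κ 2 α₁ < ⊤) (hf₂ : Anorm κ 2 α₂ < ⊤)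
    (hg₁ : Anorm κ 2 (gradV d α₁) < ⊤) (hg₂ : Anorm κ 2 (gradV d α₂) < ⊤)
    (x : E d) :
    ENNReal.ofReal ‖phaseDensity d α₁ x - phaseDensity d α₂ x‖ ≤
      ENNReal.ofReal (Aconst d κ) * (Anorm κ 2 (gradV d α₁) + Anorm κ 2 (gradV d α₂)) *
        Anorm κ 2 (α₁ - α₂) := by
  rw [ofReal_norm, mul_assoc]
  refine le_ofReal_iInf_mul (Aconst_pos (by linarith [d.cast_nonneg (α := ℝ)])) fun r => ?_
  set C := ENNReal.ofReal (1 + r.1) ^ κ / volume (ball (0 : E d) r.1)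
  have hslice : ∀ {F : Type} [NormedAddCommGroup F] {f : E d × E d → F}, Continuous f →
      eLpNorm (fun v => f (x, v)) 2 ≤ C ^ (2⁻¹ : ℝ) * Anorm κ 2 f :=
    fun hf => eLpNorm_slice_le (R := ⟨r.1, r.2.le⟩) hf x r.2
  have hc₁ := continuous_gradV hs₁
  have hc₂ := continuous_gradV hs₂
  calc ‖phaseDensity d α₁ x - phaseDensity d α₂ x‖ₑ
      ≤ eLpNorm (fun v => (α₁ - α₂) (x, v)) 2 *
          (eLpNorm (fun v => gradV d α₁ (x, v)) 2 + eLpNorm (fun v => gradV d α₂ (x, v)) 2) := by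
        unfold phaseDensity
        exact enorm_integral_conj_smul_sub_le (memLp_slice hs₁.continuous hf₁ x)
          (memLp_slice hs₂.continuous hf₂ x) (memLp_slice hc₁ hg₁ x) (memLp_slice hc₂ hg₂ x)
          (hasFDerivAt_gradV hs₁ x) (hasFDerivAt_gradV hs₂ x)
    _ ≤ C ^ (2⁻¹ : ℝ) * Anorm κ 2 (α₁ - α₂) *
          (C ^ (2⁻¹ : ℝ) * Anorm κ 2 (gradV d α₁) + C ^ (2⁻¹ : ℝ) * Anorm κ 2 (gradV d α₂)) := by
        gcongr
        exacts [hslice (hs₁.sub hs₂).continuous, hslice hc₁, hslice hc₂]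
    _ = C ^ (2⁻¹ + 2⁻¹ : ℝ) *
          ((Anorm κ 2 (gradV d α₁) + Anorm κ 2 (gradV d α₂)) * Anorm κ 2 (α₁ - α₂)) := by
        rw [ENNReal.rpow_add_of_nonneg _ _ (by norm_num) (by norm_num)]
        ring
    _ = _ := by
        norm_num only [C, ofReal_rpow_div_volume_ball κ r.2, ENNReal.rpow_one]

/-- Pointwise Lipschitz estimate for the phase density:
`|φ₁(x) − φ₂(x)| ≤ A(κ,d)(‖∇ᵥα₁‖_{A^{κ,2}} + ‖∇ᵥα₂‖_{A^{κ,2}}) ‖α₁ − α₂‖_{A^{κ,2}}`. -/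
theorem statement15 (d : ℕ) (hd : 1 ≤ d) (κ : ℝ) (hκ : 2 * (d : ℝ) ≤ κ)
    (α₁ α₂ : E d × E d → ℂ) (hs₁ : ContDiff ℝ 1 α₁) (hs₂ : ContDiff ℝ 1 α₂)
    (hf₁ : Anorm κ 2 α₁ < ⊤) (hf₂ : Anorm κ 2 α₂ < ⊤)
    (hg₁ : Anorm κ 2 (gradV d α₁) < ⊤) (hg₂ : Anorm κ 2 (gradV d α₂) < ⊤)
    (x : E d) :
    ENNReal.ofReal ‖phaseDensity d α₁ x - phaseDensity d α₂ x‖ ≤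
      ENNReal.ofReal (Aconst d κ) * (Anorm κ 2 (gradV d α₁) + Anorm κ 2 (gradV d α₂)) *
        Anorm κ 2 (α₁ - α₂) :=
  statement15_general d κ hκ α₁ α₂ hs₁ hs₂ hf₁ hf₂ hg₁ hg₂ x
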